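/- arXiv:1007.3984 — 3 statements merged into one kernel-verified Lean document; each statement's English description precedes it below -/
import Mathlib

section
/- Every matrix A in SL(2,Z) with all entries strictly positive admits a factorization as a finite product of the matrices L = [[1,0],[1,1]] and U = [[1,1],[0,1]], and this factorization is unique. -/
private def pw (w : List Bool) : Matrix (Fin 2) (Fin 2) ℤ :=
  (w.map fun b => if b then Matrix.of ![![1, 0], ![1, 1]]
        else Matrix.of ![![1, 1], ![0, 1]]).prod

private lemma pw_nil : pw [] = 1 := rfl

private lemma Lmul (B : Matrix (Fin 2) (Fin 2) ℤ) :
    (!![1,0;1,1] : Matrix (Fin 2) (Fin 2) ℤ) * B =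
      !![B 0 0, B 0 1; B 0 0 + B 1 0, B 0 1 + B 1 1] := by
  ext i j
  fin_cases i <;> fin_cases j <;>
    simp [Matrix.mul_apply, Fin.sum_univ_two]

private lemma Umul (B : Matrix (Fin 2) (Fin 2) ℤ) :
    (!![1,1;0,1] : Matrix (Fin 2) (Fin 2) ℤ) * B =
      !![B 0 0 + B 1 0, B 0 1 + B 1 1; B 1 0, B 1 1] := by
  ext i j
  fin_cases i <;> fin_cases j <;>
    simp [Matrix.mul_apply, Fin.sum_univ_two]

private lemma pw_true (w : List Bool) :
    pw (true :: w) = !![pw w 0 0, pw w 0 1; pw w 0 0 + pw w 1 0, pw w 0 1 + pw w 1 1] := by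
  show (!![1,0;1,1] : Matrix (Fin 2) (Fin 2) ℤ) * pw w = _
  rw [Lmul]

private lemma pw_false (w : List Bool) :
    pw (false :: w) = !![pw w 0 0 + pw w 1 0, pw w 0 1 + pw w 1 1; pw w 1 0, pw w 1 1] := by
  show (!![1,1;0,1] : Matrix (Fin 2) (Fin 2) ℤ) * pw w = _
  rw [Umul]

private lemma pw_good (w : List Bool) :
    (pw w).det = 1 ∧ 0 < pw w 0 0 ∧ 0 ≤ pw w 0 1 ∧ 0 ≤ pw w 1 0 ∧ 0 < pw w 1 1 := by
  induction w with
  | nil => simp [pw_nil, Matrix.one_apply]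
  | cons b w ih =>
    obtain ⟨hd, h1, h2, h3, h4⟩ := ih
    rw [Matrix.det_fin_two] at hd
    cases b
    · rw [pw_false]
      refine ⟨?_, ?_, ?_, ?_, ?_⟩ <;> simp [Matrix.det_fin_two_of] <;> nlinarith
    · rw [pw_true]
      refine ⟨?_, ?_, ?_, ?_, ?_⟩ <;> simp [Matrix.det_fin_two_of] <;> nlinarith

private lemma entries_eq {B C : Matrix (Fin 2) (Fin 2) ℤ} (h : B = C) (i j : Fin 2) :
    B i j = C i j := by rw [h]

private lemma pw_inj : ∀ w1 w2 : List Bool, pw w1 = pw w2 → w1 = w2 := by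
  intro w1
  induction w1 with
  | nil =>
    intro w2 h
    cases w2 with
    | nil => rfl
    | cons b w =>
      exfalso
      obtain ⟨hd, h1, h2, h3, h4⟩ := pw_good w
      cases b
      · rw [pw_nil, pw_false] at h
        have e2 := entries_eq h 0 1
        simp [Matrix.one_apply] at e2
        linarith
      · rw [pw_nil, pw_true] at h
        have e2 := entries_eq h 1 0
        simp [Matrix.one_apply] at e2
        linarith
  | cons b1 w1 ih =>
    intro w2 h
    cases w2 with
    | nil =>
      exfalso
      obtain ⟨hd, h1, h2, h3, h4⟩ := pw_good w1
      cases b1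
      · rw [pw_nil, pw_false] at h
        have e2 := entries_eq h 0 1
        simp [Matrix.one_apply] at e2
        linarith
      · rw [pw_nil, pw_true] at h
        have e2 := entries_eq h 1 0
        simp [Matrix.one_apply] at e2
        linarith
    | cons b2 w2 =>
      obtain ⟨hd1, a1, a2, a3, a4⟩ := pw_good w1
      obtain ⟨hd2, c1, c2, c3, c4⟩ := pw_good w2
      have hb : b1 = b2 := by
        cases b1 <;> cases b2 <;> try rfl
        · -- b1 = false (U), b2 = true (L)
          exfalso
          rw [pw_false, pw_true] at h
          have e1 := entries_eq h 0 0
          have e2 := entries_eq h 1 0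
          simp at e1 e2
          linarith
        · -- b1 = true (L), b2 = false (U)
          exfalso
          rw [pw_true, pw_false] at h
          have e1 := entries_eq h 0 0
          have e2 := entries_eq h 1 0
          simp at e1 e2
          linarith
      subst hb
      have hww : pw w1 = pw w2 := by
        cases b1
        · rw [pw_false, pw_false] at h
          have e1 := entries_eq h 0 0
          have e2 := entries_eq h 1 0
          have e3 := entries_eq h 0 1
          have e4 := entries_eq h 1 1
          simp at e1 e2 e3 e4
          ext i j
          fin_cases i <;> fin_cases j <;> simp <;> linarith
        · rw [pw_true, pw_true] at h
          have e1 := entries_eq h 0 0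
          have e2 := entries_eq h 1 0
          have e3 := entries_eq h 0 1
          have e4 := entries_eq h 1 1
          simp at e1 e2 e3 e4
          ext i j
          fin_cases i <;> fin_cases j <;> simp <;> linarith
      rw [ih w2 hww]

private lemma pw_exists : ∀ (n : ℕ) (A : Matrix (Fin 2) (Fin 2) ℤ), A.det = 1 →
    0 < A 0 0 → 0 ≤ A 0 1 → 0 ≤ A 1 0 → 0 < A 1 1 →
    (A 0 1 + A 1 0).toNat ≤ n → ∃ w, A = pw w := by
  intro n
  induction n with
  | zero =>
    intro A hdet ha hb hc hd hn
    have hb0 : A 0 1 = 0 := by omega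
    have hc0 : A 1 0 = 0 := by omega
    rw [Matrix.det_fin_two, hb0, hc0] at hdet
    have ha1 : A 0 0 = 1 := by nlinarith
    have hd1 : A 1 1 = 1 := by nlinarith
    refine ⟨[], ?_⟩
    rw [pw_nil]
    ext i j
    fin_cases i <;> fin_cases j <;> simp [Matrix.one_apply, ha1, hb0, hc0, hd1]
  | succ n ih =>
    intro A hdet ha hb hc hd hn
    have hdet2 := hdet
    rw [Matrix.det_fin_two] at hdet2
    by_cases hL : A 0 0 ≤ A 1 0 ∧ A 0 1 ≤ A 1 1
    · -- A = L * B
      obtain ⟨hL1, hL2⟩ := hL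
      set B : Matrix (Fin 2) (Fin 2) ℤ :=
        !![A 0 0, A 0 1; A 1 0 - A 0 0, A 1 1 - A 0 1] with hB
      have hdB : B.det = 1 := by
        rw [hB, Matrix.det_fin_two_of]; nlinarith
      have h4 : 0 < A 1 1 - A 0 1 := by
        rcases lt_or_eq_of_le (sub_nonneg.2 hL2) with h | h
        · exact h
        · exfalso; nlinarith
      obtain ⟨w, hw⟩ := ih B hdB (by simpa [hB] using ha) (by simpa [hB] using hb)
        (by simp [hB]; linarith) (by simp [hB]; linarith)
        (by simp [hB]; omega)
      refine ⟨true :: w, ?_⟩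
      rw [pw_true, ← hw]
      ext i j
      fin_cases i <;> fin_cases j <;> simp [hB]
    · by_cases hU : A 1 0 ≤ A 0 0 ∧ A 1 1 ≤ A 0 1
      · -- A = U * B
        obtain ⟨hU1, hU2⟩ := hU
        set B : Matrix (Fin 2) (Fin 2) ℤ :=
          !![A 0 0 - A 1 0, A 0 1 - A 1 1; A 1 0, A 1 1] with hB
        have hdB : B.det = 1 := by
          rw [hB, Matrix.det_fin_two_of]; nlinarith
        have h1 : 0 < A 0 0 - A 1 0 := by
          rcases lt_or_eq_of_le (sub_nonneg.2 hU1) with h | h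
          · exact h
          · exfalso; nlinarith
        obtain ⟨w, hw⟩ := ih B hdB (by simp [hB]; linarith) (by simp [hB]; linarith)
          (by simpa [hB] using hc) (by simpa [hB] using hd)
          (by simp [hB]; omega)
        refine ⟨false :: w, ?_⟩
        rw [pw_false, ← hw]
        ext i j
        fin_cases i <;> fin_cases j <;> simp [hB]
      · -- neither: A must be the identity
        push_neg at hL hU
        have hbc : A 0 1 = 0 ∧ A 1 0 = 0 := by
          rcases lt_or_ge (A 1 0) (A 0 0) with h1 | h1
          · rcases lt_or_ge (A 0 1) (A 1 1) with h2 | h2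
            · constructor <;> nlinarith
            · exact absurd (hU h1.le) (not_lt.2 h2)
          · rcases lt_or_ge (A 1 1) (A 0 1) with h2 | h2
            · exfalso; nlinarith [hL h1]
            · exact absurd (hL h1) (not_lt.2 h2)
        obtain ⟨hb0, hc0⟩ := hbc
        rw [hb0, hc0] at hdet2
        have ha1 : A 0 0 = 1 := by nlinarith
        have hd1 : A 1 1 = 1 := by nlinarith
        refine ⟨[], ?_⟩
        rw [pw_nil]
        ext i j
        fin_cases i <;> fin_cases j <;> simp [Matrix.one_apply, ha1, hb0, hc0, hd1]

theorem stmt_3 (A : Matrix (Fin 2) (Fin 2) ℤ) (hdet : A.det = 1)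
    (hpos : ∀ i j, 0 < A i j) :
    ∃! w : List Bool,
      A = (w.map fun b => if b then Matrix.of ![![1, 0], ![1, 1]]
        else Matrix.of ![![1, 1], ![0, 1]]).prod := by
  obtain ⟨w, hw⟩ := pw_exists (A 0 1 + A 1 0).toNat A hdet (hpos 0 0)
    (le_of_lt (hpos 0 1)) (le_of_lt (hpos 1 0)) (hpos 1 1) le_rfl
  refine ⟨w, hw, fun w' hw' => ?_⟩
  exact pw_inj w' w (by rw [show pw w' = A from hw'.symm, show pw w = A from hw.symm])
end

section
/- For a closed parallelogram in R^2 with vertices in Z^2, its area equals the number of integer points in its interior, plus one half the number of integer points on its boundary excluding the four vertices, plus 1. -/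
namespace Pick7


/-- determinant -/
def dd (a b : ℤ × ℤ) : ℤ := a.1 * b.2 - a.2 * b.1
/-- first Cramer form (depends only on b) -/
def pp (b x : ℤ × ℤ) : ℤ := x.1 * b.2 - x.2 * b.1
/-- second Cramer form (depends only on a) -/
def qq (a x : ℤ × ℤ) : ℤ := a.1 * x.2 - a.2 * x.1

/-- shift by m•a + n•b -/
def sh (a b : ℤ × ℤ) (m n : ℤ) (x : ℤ × ℤ) : ℤ × ℤ :=
  (x.1 + m * a.1 + n * b.1, x.2 + m * a.2 + n * b.2)

lemma pp_sh (a b : ℤ × ℤ) (m n : ℤ) (x : ℤ × ℤ) :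
    pp b (sh a b m n x) = pp b x + m * dd a b := by
  simp only [pp, sh, dd]; ring

lemma qq_sh (a b : ℤ × ℤ) (m n : ℤ) (x : ℤ × ℤ) :
    qq a (sh a b m n x) = qq a x + n * dd a b := by
  simp only [qq, sh, dd]; ring

lemma sh_sh (a b : ℤ × ℤ) (m n m' n' : ℤ) (x : ℤ × ℤ) :
    sh a b m n (sh a b m' n' x) = sh a b (m + m') (n + n') x := by
  simp only [sh, Prod.mk.injEq]; constructor <;> ring

lemma sh_zero (a b : ℤ × ℤ) (x : ℤ × ℤ) : sh a b 0 0 x = x := by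
  simp [sh]

/-- generalized (sheared) window -/
def W (a b : ℤ × ℤ) (c γ δ : ℤ) : Set (ℤ × ℤ) :=
  {x | c * qq a x + γ ≤ pp b x ∧ pp b x < c * qq a x + γ + dd a b ∧
       δ ≤ qq a x ∧ qq a x < δ + dd a b}

/-- normalization map into window (c, γ, δ) -/
def Φ (a b : ℤ × ℤ) (c γ δ : ℤ) (x : ℤ × ℤ) : ℤ × ℤ :=
  sh a b (-(c * ((qq a x - δ) / dd a b)) - (pp b x - c * qq a x - γ) / dd a b)
         (-((qq a x - δ) / dd a b)) x

lemma phi_eq_sh (a b : ℤ × ℤ) (c γ δ : ℤ) (x : ℤ × ℤ) : Φ a b c γ δ x =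
    sh a b (-(c * ((qq a x - δ) / dd a b)) - (pp b x - c * qq a x - γ) / dd a b)
           (-((qq a x - δ) / dd a b)) x := rfl

lemma phi_fixed {a b : ℤ × ℤ} {c γ δ : ℤ} {x : ℤ × ℤ} (hx : x ∈ W a b c γ δ) :
    Φ a b c γ δ x = x := by
  obtain ⟨h1, h2, h3, h4⟩ := hx
  have e1 : (pp b x - c * qq a x - γ) / dd a b = 0 :=
    Int.ediv_eq_zero_of_lt (by omega) (by omega)
  have e2 : (qq a x - δ) / dd a b = 0 :=
    Int.ediv_eq_zero_of_lt (by omega) (by omega)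
  rw [Φ, e1, e2]; simpa using sh_zero a b x

lemma phi_sh (a b : ℤ × ℤ) (hd : dd a b ≠ 0) (c γ δ m n : ℤ) (x : ℤ × ℤ) :
    Φ a b c γ δ (sh a b m n x) = Φ a b c γ δ x := by
  have hq : qq a (sh a b m n x) = qq a x + n * dd a b := qq_sh a b m n x
  have hp : pp b (sh a b m n x) = pp b x + m * dd a b := pp_sh a b m n x
  have e2 : (qq a (sh a b m n x) - δ) / dd a b = (qq a x - δ) / dd a b + n := by
    rw [hq]
    rw [show qq a x + n * dd a b - δ = (qq a x - δ) + n * dd a b by ring]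
    exact Int.add_mul_ediv_right _ _ hd
  have e1 : (pp b (sh a b m n x) - c * qq a (sh a b m n x) - γ) / dd a b
      = (pp b x - c * qq a x - γ) / dd a b + (m - c * n) := by
    rw [hp, hq]
    rw [show pp b x + m * dd a b - c * (qq a x + n * dd a b) - γ
        = (pp b x - c * qq a x - γ) + (m - c * n) * dd a b by ring]
    exact Int.add_mul_ediv_right _ _ hd
  rw [Φ, Φ, e1, e2, sh_sh]
  congr 1 <;> ring

lemma phi_mem (a b : ℤ × ℤ) (hd : 0 < dd a b) (c γ δ : ℤ) (x : ℤ × ℤ) :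
    Φ a b c γ δ x ∈ W a b c γ δ := by
  have hd' : dd a b ≠ 0 := hd.ne'
  have hp : pp b (Φ a b c γ δ x) = pp b x +
      (-(c * ((qq a x - δ) / dd a b)) - (pp b x - c * qq a x - γ) / dd a b) * dd a b :=
    pp_sh a b _ _ x
  have hq : qq a (Φ a b c γ δ x) = qq a x + (-((qq a x - δ) / dd a b)) * dd a b :=
    qq_sh a b _ _ x
  have kq : qq a (Φ a b c γ δ x) = δ + (qq a x - δ) % dd a b := by
    rw [hq, Int.emod_def]; ring
  have kp : pp b (Φ a b c γ δ x) - c * qq a (Φ a b c γ δ x) - γ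
      = (pp b x - c * qq a x - γ) % dd a b := by
    rw [hp, hq, Int.emod_def]; ring
  have m1 : 0 ≤ (qq a x - δ) % dd a b := Int.emod_nonneg _ hd'
  have m2 : (qq a x - δ) % dd a b < dd a b := Int.emod_lt_of_pos _ hd
  have m3 : 0 ≤ (pp b x - c * qq a x - γ) % dd a b := Int.emod_nonneg _ hd'
  have m4 : (pp b x - c * qq a x - γ) % dd a b < dd a b := Int.emod_lt_of_pos _ hd
  refine ⟨by omega, by omega, by omega, by omega⟩

lemma ncard_eq_of_inv {S T : Set (ℤ × ℤ)} {f g : ℤ × ℤ → ℤ × ℤ}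
    (hf : Set.MapsTo f S T) (hg : Set.MapsTo g T S)
    (hgf : ∀ x ∈ S, g (f x) = x) (hfg : ∀ y ∈ T, f (g y) = y) :
    S.ncard = T.ncard := by
  have h1 : f '' S = T := by
    apply Set.Subset.antisymm (Set.image_subset_iff.mpr hf)
    intro y hy; exact ⟨g y, hg hy, hfg y hy⟩
  have h2 : Set.InjOn f S := fun x hx x' hx' h => by
    rw [← hgf x hx, ← hgf x' hx', h]
  rw [← h1, Set.ncard_image_of_injOn h2]

/-- the count of a window is independent of the window parameters -/
lemma wcard (a b : ℤ × ℤ) (hd : 0 < dd a b) (c γ δ c' γ' δ' : ℤ) :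
    (W a b c γ δ).ncard = (W a b c' γ' δ').ncard := by
  have hd' : dd a b ≠ 0 := hd.ne'
  apply ncard_eq_of_inv (f := Φ a b c' γ' δ') (g := Φ a b c γ δ)
  · intro x _; exact phi_mem a b hd c' γ' δ' x
  · intro x _; exact phi_mem a b hd c γ δ x
  · intro x hx
    rw [phi_eq_sh a b c' γ' δ' x, phi_sh a b hd', phi_fixed hx]
  · intro y hy
    rw [phi_eq_sh a b c γ δ y, phi_sh a b hd', phi_fixed hy]



lemma opC_set (u v : ℤ × ℤ) :
    W (-v.1, -v.2) u 0 0 0 = W u v 0 0 (1 - dd u v) := by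
  ext x
  simp only [W, Set.mem_setOf_eq, zero_mul, zero_add, add_zero]
  have h1 : pp u x = -(qq u x) := by simp only [pp, qq]; ring
  have h2 : qq (-v.1, -v.2) x = pp v x := by simp only [pp, qq]; ring
  have h3 : dd (-v.1, -v.2) u = dd u v := by simp only [dd]; ring
  rw [h1, h2, h3]
  have := dd u v
  omega

lemma opA_set (u v : ℤ × ℤ) (k : ℤ) :
    W u (v.1 + k * u.1, v.2 + k * u.2) 0 0 0 = W u v k 0 0 := by
  ext x
  simp only [W, Set.mem_setOf_eq, zero_mul, zero_add, add_zero]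
  have h1 : pp (v.1 + k * u.1, v.2 + k * u.2) x = pp v x - k * qq u x := by
    simp only [pp, qq]; ring
  have h2 : dd u (v.1 + k * u.1, v.2 + k * u.2) = dd u v := by
    simp only [dd]; ring
  rw [h1, h2]
  generalize k * qq u x = K
  omega

lemma base_count (a b : ℤ × ℤ) (hb1 : b.1 = 0) (ha1 : 0 < a.1) (hb2 : 0 < b.2) :
    (W a b 0 0 0).ncard = (dd a b).toNat := by
  have ha1' : a.1 ≠ 0 := ha1.ne'
  have hdd : dd a b = a.1 * b.2 := by simp [dd, hb1]
  have hT : ((Finset.Ico (0:ℤ) a.1 ×ˢ Finset.Ico (0:ℤ) b.2 : Finset (ℤ × ℤ)) :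
      Set (ℤ × ℤ)).ncard = (dd a b).toNat := by
    rw [Set.ncard_coe_finset, Finset.card_product, Int.card_Ico, Int.card_Ico, hdd]
    have : ((a.1 * b.2).toNat : ℤ) = ((a.1 - 0).toNat * (b.2 - 0).toNat : ℕ) := by
      push_cast
      rw [Int.toNat_of_nonneg (by positivity), Int.toNat_of_nonneg (by omega),
        Int.toNat_of_nonneg (by omega)]
      ring
    omega
  rw [← hT]
  apply ncard_eq_of_inv (f := fun x => (x.1, qq a x / a.1))
    (g := fun y => (y.1, y.2 - (-(a.2 * y.1)) / a.1))
  · -- MapsTo f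
    rintro x ⟨k1, k2, k3, k4⟩
    simp only [zero_mul, zero_add, add_zero, hdd] at k1 k2 k3 k4
    have hp : pp b x = x.1 * b.2 := by simp [pp, hb1]
    rw [hp] at k1 k2
    simp only [Finset.coe_product, Set.mem_prod, Finset.mem_coe, Finset.mem_Ico]
    constructor
    · constructor
      · nlinarith
      · nlinarith
    · constructor
      · exact Int.ediv_nonneg k3 ha1.le
      · rw [Int.ediv_lt_iff_lt_mul ha1]; nlinarith
  · -- MapsTo g
    rintro ⟨u, w⟩ hy
    simp only [Finset.coe_product, Set.mem_prod, Finset.mem_coe, Finset.mem_Ico] at hy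
    obtain ⟨⟨hu0, hu1⟩, hw0, hw1⟩ := hy
    have hp : pp b (u, w - (-(a.2 * u)) / a.1) = u * b.2 := by simp [pp, hb1]
    have hq : qq a (u, w - (-(a.2 * u)) / a.1) = a.1 * w + (-(a.2 * u)) % a.1 := by
      simp only [qq, Int.emod_def]; ring
    refine ⟨?_, ?_, ?_, ?_⟩ <;>
      simp only [zero_mul, zero_add, add_zero, hdd, hp, hq]
    · positivity
    · nlinarith
    · have := Int.emod_nonneg (-(a.2 * u)) ha1'
      positivity
    · have h1 := Int.emod_lt_of_pos (-(a.2 * u)) ha1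
      nlinarith
  · -- g ∘ f = id
    intro x _
    have : qq a x / a.1 = (-(a.2 * x.1)) / a.1 + x.2 := by
      rw [show qq a x = -(a.2 * x.1) + a.1 * x.2 by simp only [qq]; ring]
      exact Int.add_mul_ediv_left _ _ ha1'
    simp only [this]
    rw [show (-(a.2 * x.1)) / a.1 + x.2 - (-(a.2 * x.1)) / a.1 = x.2 by ring]
  · -- f ∘ g = id
    rintro ⟨u, w⟩ _
    have hq : qq a (u, w - (-(a.2 * u)) / a.1) = (-(a.2 * u)) % a.1 + a.1 * w := by
      simp only [qq, Int.emod_def]; ring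
    simp only [hq]
    rw [Int.add_mul_ediv_left _ _ ha1',
      Int.ediv_eq_zero_of_lt (Int.emod_nonneg _ ha1') (Int.emod_lt_of_pos _ ha1)]
    simp

lemma base_full (a b : ℤ × ℤ) (hb1 : b.1 = 0) (hd : 0 < dd a b) :
    (W a b 0 0 0).ncard = (dd a b).toNat := by
  have hdd : dd a b = a.1 * b.2 := by simp [dd, hb1]
  rcases lt_trichotomy a.1 0 with h | h | h
  · -- a.1 < 0, so b.2 < 0; use two opC steps
    have hb2 : b.2 < 0 := by nlinarith
    have e1 : (W a b 0 0 0).ncard = (W a b 0 0 (1 - dd a b)).ncard :=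
      wcard a b hd 0 0 0 0 0 (1 - dd a b)
    have d2 : dd (-b.1, -b.2) a = dd a b := by simp only [dd]; ring
    have e2 : (W (-b.1, -b.2) a 0 0 0).ncard = (W (-b.1, -b.2) a 0 0 (1 - dd (-b.1, -b.2) a)).ncard :=
      wcard _ _ (by rw [d2]; exact hd) 0 0 0 0 0 _
    have s1 : W (-b.1, -b.2) a 0 0 0 = W a b 0 0 (1 - dd a b) := opC_set a b
    have s2 : W (-a.1, -a.2) (-b.1, -b.2) 0 0 0
        = W (-b.1, -b.2) a 0 0 (1 - dd (-b.1, -b.2) a) := opC_set (-b.1, -b.2) a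
    have d3 : dd (-a.1, -a.2) (-b.1, -b.2) = dd a b := by simp only [dd]; ring
    have e3 : (W (-a.1, -a.2) (-b.1, -b.2) 0 0 0).ncard = (dd (-a.1, -a.2) (-b.1, -b.2)).toNat := by
      apply base_count <;> simp <;> omega
    rw [e1, ← s1, e2, ← s2] at *
    rw [e3, d3]
  · exfalso; rw [hdd, h] at hd; simp at hd
  · have hb2 : 0 < b.2 := by nlinarith
    exact base_count a b hb1 h hb2

lemma core (n : ℕ) : ∀ a b : ℤ × ℤ, b.1.natAbs ≤ n → 0 < dd a b →
    (W a b 0 0 0).ncard = (dd a b).toNat := by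
  induction n with
  | zero =>
    intro a b hb hd
    exact base_full a b (by omega) hd
  | succ n ih =>
    intro a b hb hd
    by_cases hb1 : b.1 = 0
    · exact base_full a b hb1 hd
    · set k := a.1 / b.1 with hk
      set B : ℤ × ℤ := (a.1 + -(k * b.1), a.2 + -(k * b.2)) with hBdef
      have hB1 : B.1 = a.1 % b.1 := by
        simp only [hBdef, hk, Int.emod_def]; ring
      have hr0 : 0 ≤ a.1 % b.1 := Int.emod_nonneg _ hb1
      have hr1 : a.1 % b.1 < |b.1| := by
        have := Int.emod_lt a.1 hb1; rw [Int.abs_eq_natAbs]; exact this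
      have habs : |b.1| = b.1.natAbs := Int.abs_eq_natAbs b.1
      have hBn : B.1.natAbs ≤ n := by rw [hB1]; omega
      have d2 : dd (-b.1, -b.2) a = dd a b := by simp only [dd]; ring
      have d3 : dd (-b.1, -b.2) B = dd a b := by simp only [hBdef, dd]; ring
      have e1 : (W a b 0 0 0).ncard = (W a b 0 0 (1 - dd a b)).ncard :=
        wcard a b hd 0 0 0 0 0 _
      have s1 : W (-b.1, -b.2) a 0 0 0 = W a b 0 0 (1 - dd a b) := opC_set a b
      have e2 : (W (-b.1, -b.2) a 0 0 0).ncard = (W (-b.1, -b.2) a k 0 0).ncard :=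
        wcard _ _ (by rw [d2]; exact hd) 0 0 0 k 0 0
      have s2 : W (-b.1, -b.2) B 0 0 0 = W (-b.1, -b.2) a k 0 0 := by
        have := opA_set (-b.1, -b.2) a k
        simpa using this
      have e3 : (W (-b.1, -b.2) B 0 0 0).ncard = (dd (-b.1, -b.2) B).toNat :=
        ih (-b.1, -b.2) B hBn (by rw [d3]; exact hd)
      rw [e1, ← s1, e2, ← s2, e3, d3]




def PP (v₀ b x : ℤ × ℤ) : ℤ := (x.1 - v₀.1) * b.2 - (x.2 - v₀.2) * b.1
def QQ (v₀ a x : ℤ × ℤ) : ℤ := a.1 * (x.2 - v₀.2) - a.2 * (x.1 - v₀.1)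

lemma st_val (v₀ a b x : ℤ × ℤ) (s t : ℝ)
    (h1 : (x.1 : ℝ) = v₀.1 + s * a.1 + t * b.1)
    (h2 : (x.2 : ℝ) = v₀.2 + s * a.2 + t * b.2) :
    s * (dd a b : ℝ) = (PP v₀ b x : ℝ) ∧ t * (dd a b : ℝ) = (QQ v₀ a x : ℝ) := by
  constructor
  · simp only [PP, dd]; push_cast
    linear_combination (b.1 : ℝ) * h2 - (b.2 : ℝ) * h1
  · simp only [QQ, dd]; push_cast
    linear_combination (a.2 : ℝ) * h1 - (a.1 : ℝ) * h2

lemma real_eqs (v₀ a b : ℤ × ℤ) (hd : dd a b ≠ 0) (x : ℤ × ℤ) :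
    ((x.1 : ℝ) = v₀.1 + ((PP v₀ b x : ℝ) / (dd a b : ℝ)) * a.1
        + ((QQ v₀ a x : ℝ) / (dd a b : ℝ)) * b.1) ∧
    ((x.2 : ℝ) = v₀.2 + ((PP v₀ b x : ℝ) / (dd a b : ℝ)) * a.2
        + ((QQ v₀ a x : ℝ) / (dd a b : ℝ)) * b.2) := by
  have hdr : (dd a b : ℝ) ≠ 0 := Int.cast_ne_zero.mpr hd
  constructor <;>
  · field_simp
    simp only [PP, QQ, dd]
    push_cast
    ring

lemma eq_point_iff (v₀ a b : ℤ × ℤ) (hd : dd a b ≠ 0) (x w : ℤ × ℤ) :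
    x = w ↔ (PP v₀ b x = PP v₀ b w ∧ QQ v₀ a x = QQ v₀ a w) := by
  constructor
  · rintro rfl; exact ⟨rfl, rfl⟩
  · rintro ⟨hp, hq⟩
    have i1 : dd a b * (x.1 - w.1)
        = a.1 * (PP v₀ b x - PP v₀ b w) + b.1 * (QQ v₀ a x - QQ v₀ a w) := by
      simp only [PP, QQ, dd]; ring
    have i2 : dd a b * (x.2 - w.2)
        = a.2 * (PP v₀ b x - PP v₀ b w) + b.2 * (QQ v₀ a x - QQ v₀ a w) := by
      simp only [PP, QQ, dd]; ring
    rw [hp, hq, sub_self, sub_self, mul_zero, mul_zero, add_zero] at i1 i2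
    have e1 : x.1 - w.1 = 0 := by
      rcases mul_eq_zero.mp i1 with h | h 
      · exact absurd h hd
      · exact h
    have e2 : x.2 - w.2 = 0 := by
      rcases mul_eq_zero.mp i2 with h | h
      · exact absurd h hd
      · exact h
    exact Prod.ext (by omega) (by omega)

lemma fin_helper (v₀ a b : ℤ × ℤ) (hd : dd a b ≠ 0) (T : Set (ℤ × ℤ)) (M : ℤ)
    (hT : ∀ x ∈ T, -M ≤ PP v₀ b x ∧ PP v₀ b x ≤ M ∧ -M ≤ QQ v₀ a x ∧ QQ v₀ a x ≤ M) :
    T.Finite := by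
  apply Set.Finite.of_finite_image (f := fun x => (PP v₀ b x, QQ v₀ a x))
  · apply Set.Finite.subset (Set.finite_Icc ((-M, -M) : ℤ × ℤ) (M, M))
    rintro ⟨u, w⟩ ⟨x, hx, hxe⟩
    obtain ⟨h1, h2, h3, h4⟩ := hT x hx
    simp only [Prod.mk.injEq] at hxe
    simp only [Set.mem_Icc, Prod.le_def]
    constructor <;> constructor <;> omega
  · intro x hx y hy hxy
    simp only [Prod.mk.injEq] at hxy
    exact (eq_point_iff v₀ a b hd x y).mpr ⟨hxy.1, hxy.2⟩




lemma main_pos (v₀ a b : ℤ × ℤ) (hd : 0 < dd a b)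
    (I B : Set (ℤ × ℤ))
    (hI : I = {x | ∃ s t : ℝ, 0 < s ∧ s < 1 ∧ 0 < t ∧ t < 1 ∧
      (x.1 : ℝ) = v₀.1 + s * a.1 + t * b.1 ∧ (x.2 : ℝ) = v₀.2 + s * a.2 + t * b.2})
    (hB : B = {x | (∃ s t : ℝ, 0 ≤ s ∧ s ≤ 1 ∧ 0 ≤ t ∧ t ≤ 1 ∧
      (s = 0 ∨ s = 1 ∨ t = 0 ∨ t = 1) ∧
      (x.1 : ℝ) = v₀.1 + s * a.1 + t * b.1 ∧ (x.2 : ℝ) = v₀.2 + s * a.2 + t * b.2) ∧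
      x ≠ v₀ ∧ x ≠ v₀ + a ∧ x ≠ v₀ + b ∧ x ≠ v₀ + a + b}) :
    (|a.1 * b.2 - a.2 * b.1| : ℝ) = I.ncard + B.ncard / 2 + 1 := by
  have hd0 : dd a b ≠ 0 := hd.ne'
  have hdr : (0:ℝ) < (dd a b : ℝ) := by exact_mod_cast hd
  -- vertex values
  have pv0 : PP v₀ b v₀ = 0 := by simp only [PP]; ring
  have qv0 : QQ v₀ a v₀ = 0 := by simp only [QQ]; ring
  have pva : PP v₀ b (v₀ + a) = dd a b := by
    simp only [PP, dd, Prod.fst_add, Prod.snd_add]; ring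
  have qva : QQ v₀ a (v₀ + a) = 0 := by
    simp only [QQ, Prod.fst_add, Prod.snd_add]; ring
  have pvb : PP v₀ b (v₀ + b) = 0 := by
    simp only [PP, Prod.fst_add, Prod.snd_add]; ring
  have qvb : QQ v₀ a (v₀ + b) = dd a b := by
    simp only [QQ, dd, Prod.fst_add, Prod.snd_add]; ring
  have pvab : PP v₀ b (v₀ + a + b) = dd a b := by
    simp only [PP, dd, Prod.fst_add, Prod.snd_add]; ring
  have qvab : QQ v₀ a (v₀ + a + b) = dd a b := by
    simp only [QQ, dd, Prod.fst_add, Prod.snd_add]; ring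
  have hv0 : ∀ x : ℤ × ℤ, x = v₀ ↔ (PP v₀ b x = 0 ∧ QQ v₀ a x = 0) := fun x => by
    rw [eq_point_iff v₀ a b hd0 x v₀, pv0, qv0]
  have hva : ∀ x : ℤ × ℤ, x = v₀ + a ↔ (PP v₀ b x = dd a b ∧ QQ v₀ a x = 0) := fun x => by
    rw [eq_point_iff v₀ a b hd0 x (v₀ + a), pva, qva]
  have hvb : ∀ x : ℤ × ℤ, x = v₀ + b ↔ (PP v₀ b x = 0 ∧ QQ v₀ a x = dd a b) := fun x => by
    rw [eq_point_iff v₀ a b hd0 x (v₀ + b), pvb, qvb]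
  have hvab : ∀ x : ℤ × ℤ, x = v₀ + a + b ↔ (PP v₀ b x = dd a b ∧ QQ v₀ a x = dd a b) :=
    fun x => by rw [eq_point_iff v₀ a b hd0 x (v₀ + a + b), pvab, qvab]
  -- characterization of I
  have hI2 : I = {x | 0 < PP v₀ b x ∧ PP v₀ b x < dd a b ∧
      0 < QQ v₀ a x ∧ QQ v₀ a x < dd a b} := by
    rw [hI]; ext x; simp only [Set.mem_setOf_eq]
    constructor
    · rintro ⟨s, t, hs0, hs1, ht0, ht1, h1, h2⟩
      obtain ⟨es, et⟩ := st_val v₀ a b x s t h1 h2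
      have p0 : (0:ℝ) < (PP v₀ b x : ℝ) := es ▸ mul_pos hs0 hdr
      have p1 : (PP v₀ b x : ℝ) < (dd a b : ℝ) := by rw [← es]; nlinarith
      have q0 : (0:ℝ) < (QQ v₀ a x : ℝ) := et ▸ mul_pos ht0 hdr
      have q1 : (QQ v₀ a x : ℝ) < (dd a b : ℝ) := by rw [← et]; nlinarith
      exact ⟨by exact_mod_cast p0, by exact_mod_cast p1,
        by exact_mod_cast q0, by exact_mod_cast q1⟩
    · rintro ⟨p0, p1, q0, q1⟩
      refine ⟨(PP v₀ b x : ℝ) / (dd a b : ℝ), (QQ v₀ a x : ℝ) / (dd a b : ℝ),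
        div_pos (by exact_mod_cast p0) hdr,
        (div_lt_one hdr).mpr (by exact_mod_cast p1),
        div_pos (by exact_mod_cast q0) hdr,
        (div_lt_one hdr).mpr (by exact_mod_cast q1),
        (real_eqs v₀ a b hd0 x).1, (real_eqs v₀ a b hd0 x).2⟩
  -- characterization of B
  have hB2 : B = {x | (0 ≤ PP v₀ b x ∧ PP v₀ b x ≤ dd a b ∧
      0 ≤ QQ v₀ a x ∧ QQ v₀ a x ≤ dd a b ∧
      (PP v₀ b x = 0 ∨ PP v₀ b x = dd a b ∨ QQ v₀ a x = 0 ∨ QQ v₀ a x = dd a b)) ∧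
      ¬(PP v₀ b x = 0 ∧ QQ v₀ a x = 0) ∧ ¬(PP v₀ b x = dd a b ∧ QQ v₀ a x = 0) ∧
      ¬(PP v₀ b x = 0 ∧ QQ v₀ a x = dd a b) ∧
      ¬(PP v₀ b x = dd a b ∧ QQ v₀ a x = dd a b)} := by
    rw [hB]; ext x; simp only [Set.mem_setOf_eq, Ne]
    apply and_congr
    · constructor
      · rintro ⟨s, t, hs0, hs1, ht0, ht1, hor, h1, h2⟩
        obtain ⟨es, et⟩ := st_val v₀ a b x s t h1 h2
        have p0 : (0:ℝ) ≤ (PP v₀ b x : ℝ) := es ▸ mul_nonneg hs0 hdr.le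
        have p1 : (PP v₀ b x : ℝ) ≤ (dd a b : ℝ) := by rw [← es]; nlinarith
        have q0 : (0:ℝ) ≤ (QQ v₀ a x : ℝ) := et ▸ mul_nonneg ht0 hdr.le
        have q1 : (QQ v₀ a x : ℝ) ≤ (dd a b : ℝ) := by rw [← et]; nlinarith
        refine ⟨by exact_mod_cast p0, by exact_mod_cast p1,
          by exact_mod_cast q0, by exact_mod_cast q1, ?_⟩
        rcases hor with h | h | h | h
        · left
          have : (PP v₀ b x : ℝ) = 0 := by rw [← es, h, zero_mul]
          exact_mod_cast this
        · right; left
          have : (PP v₀ b x : ℝ) = (dd a b : ℝ) := by rw [← es, h, one_mul]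
          exact_mod_cast this
        · right; right; left
          have : (QQ v₀ a x : ℝ) = 0 := by rw [← et, h, zero_mul]
          exact_mod_cast this
        · right; right; right
          have : (QQ v₀ a x : ℝ) = (dd a b : ℝ) := by rw [← et, h, one_mul]
          exact_mod_cast this
      · rintro ⟨p0, p1, q0, q1, hor⟩
        refine ⟨(PP v₀ b x : ℝ) / (dd a b : ℝ), (QQ v₀ a x : ℝ) / (dd a b : ℝ),
          div_nonneg (by exact_mod_cast p0) hdr.le,
          (div_le_one hdr).mpr (by exact_mod_cast p1),
          div_nonneg (by exact_mod_cast q0) hdr.le,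
          (div_le_one hdr).mpr (by exact_mod_cast q1), ?_,
          (real_eqs v₀ a b hd0 x).1, (real_eqs v₀ a b hd0 x).2⟩
        rcases hor with h | h | h | h
        · left; rw [h]; simp
        · right; left; rw [h]; exact div_self hdr.ne'
        · right; right; left; rw [h]; simp
        · right; right; right; rw [h]; exact div_self hdr.ne'
    · rw [hv0 x, hva x, hvb x, hvab x]
  -- the sets
  set E1 : Set (ℤ × ℤ) := {x | PP v₀ b x = 0 ∧ 0 < QQ v₀ a x ∧ QQ v₀ a x < dd a b}
    with hE1def
  set E1' : Set (ℤ × ℤ) := {x | PP v₀ b x = dd a b ∧ 0 < QQ v₀ a x ∧ QQ v₀ a x < dd a b}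
    with hE1'def
  set E2 : Set (ℤ × ℤ) := {x | QQ v₀ a x = 0 ∧ 0 < PP v₀ b x ∧ PP v₀ b x < dd a b}
    with hE2def
  set E2' : Set (ℤ × ℤ) := {x | QQ v₀ a x = dd a b ∧ 0 < PP v₀ b x ∧ PP v₀ b x < dd a b}
    with hE2'def
  set SH : Set (ℤ × ℤ) := {x | 0 ≤ PP v₀ b x ∧ PP v₀ b x < dd a b ∧
      0 ≤ QQ v₀ a x ∧ QQ v₀ a x < dd a b} with hSHdef
  -- finiteness
  have finSQ : Set.Finite {x : ℤ × ℤ | 0 ≤ PP v₀ b x ∧ PP v₀ b x ≤ dd a b ∧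
      0 ≤ QQ v₀ a x ∧ QQ v₀ a x ≤ dd a b} := by
    apply fin_helper v₀ a b hd0 _ (dd a b)
    rintro x ⟨h1, h2, h3, h4⟩
    exact ⟨by omega, h2, by omega, h4⟩
  have finE1 : E1.Finite := finSQ.subset fun x hx => by
    rw [hE1def] at hx; simp only [Set.mem_setOf_eq] at *; omega
  have finE1' : E1'.Finite := finSQ.subset fun x hx => by
    rw [hE1'def] at hx; simp only [Set.mem_setOf_eq] at *; omega
  have finE2 : E2.Finite := finSQ.subset fun x hx => by
    rw [hE2def] at hx; simp only [Set.mem_setOf_eq] at *; omega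
  have finE2' : E2'.Finite := finSQ.subset fun x hx => by
    rw [hE2'def] at hx; simp only [Set.mem_setOf_eq] at *; omega
  have finI : I.Finite := finSQ.subset fun x hx => by
    rw [hI2] at hx; simp only [Set.mem_setOf_eq] at *; omega
  have finSH : SH.Finite := finSQ.subset fun x hx => by
    rw [hSHdef] at hx; simp only [Set.mem_setOf_eq] at *; omega
  -- shifts
  have hPa : ∀ x : ℤ × ℤ, PP v₀ b (x + a) = PP v₀ b x + dd a b := fun x => by
    simp only [PP, dd, Prod.fst_add, Prod.snd_add]; ring
  have hQa : ∀ x : ℤ × ℤ, QQ v₀ a (x + a) = QQ v₀ a x := fun x => by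
    simp only [QQ, Prod.fst_add, Prod.snd_add]; ring
  have hPb : ∀ x : ℤ × ℤ, PP v₀ b (x + b) = PP v₀ b x := fun x => by
    simp only [PP, Prod.fst_add, Prod.snd_add]; ring
  have hQb : ∀ x : ℤ × ℤ, QQ v₀ a (x + b) = QQ v₀ a x + dd a b := fun x => by
    simp only [QQ, dd, Prod.fst_add, Prod.snd_add]; ring
  -- translated edges
  have imgE1 : E1' = (fun x => x + a) '' E1 := by
    rw [hE1def, hE1'def]; ext y
    simp only [Set.mem_image, Set.mem_setOf_eq]
    constructor
    · rintro ⟨h1, h2, h3⟩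
      refine ⟨(y.1 - a.1, y.2 - a.2), ⟨?_, ?_, ?_⟩, ?_⟩
      · have e1 : PP v₀ b (y.1 - a.1, y.2 - a.2) = PP v₀ b y - dd a b := by
          simp only [PP, dd]; ring
        omega
      · have e2 : QQ v₀ a (y.1 - a.1, y.2 - a.2) = QQ v₀ a y := by
          simp only [QQ]; ring
        omega
      · have e2 : QQ v₀ a (y.1 - a.1, y.2 - a.2) = QQ v₀ a y := by
          simp only [QQ]; ring
        omega
      · exact Prod.ext (by simp) (by simp)
    · rintro ⟨x, ⟨h1, h2, h3⟩, rfl⟩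
      rw [hPa, hQa]
      exact ⟨by omega, h2, h3⟩
  have imgE2 : E2' = (fun x => x + b) '' E2 := by
    rw [hE2def, hE2'def]; ext y
    simp only [Set.mem_image, Set.mem_setOf_eq]
    constructor
    · rintro ⟨h1, h2, h3⟩
      refine ⟨(y.1 - b.1, y.2 - b.2), ⟨?_, ?_, ?_⟩, ?_⟩
      · have e1 : QQ v₀ a (y.1 - b.1, y.2 - b.2) = QQ v₀ a y - dd a b := by
          simp only [QQ, dd]; ring
        omega
      · have e2 : PP v₀ b (y.1 - b.1, y.2 - b.2) = PP v₀ b y := by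
          simp only [PP]; ring
        omega
      · have e2 : PP v₀ b (y.1 - b.1, y.2 - b.2) = PP v₀ b y := by
          simp only [PP]; ring
        omega
      · exact Prod.ext (by simp) (by simp)
    · rintro ⟨x, ⟨h1, h2, h3⟩, rfl⟩
      rw [hPb, hQb]
      exact ⟨by omega, h2, h3⟩
  have cardE1' : E1'.ncard = E1.ncard := by
    rw [imgE1]; exact Set.ncard_image_of_injective _ (add_left_injective a)
  have cardE2' : E2'.ncard = E2.ncard := by
    rw [imgE2]; exact Set.ncard_image_of_injective _ (add_left_injective b)
  -- decomposition of B
  have hBsplit : B = (E1 ∪ E1') ∪ (E2 ∪ E2') := by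
    rw [hB2, hE1def, hE1'def, hE2def, hE2'def]; ext x
    simp only [Set.mem_union, Set.mem_setOf_eq]
    omega
  have dj1 : Disjoint E1 E1' := Set.disjoint_left.mpr fun x hx hx' => by
    rw [hE1def] at hx; rw [hE1'def] at hx'
    simp only [Set.mem_setOf_eq] at hx hx'; omega
  have dj2 : Disjoint E2 E2' := Set.disjoint_left.mpr fun x hx hx' => by
    rw [hE2def] at hx; rw [hE2'def] at hx'
    simp only [Set.mem_setOf_eq] at hx hx'; omega
  have dj3 : Disjoint (E1 ∪ E1') (E2 ∪ E2') := Set.disjoint_left.mpr fun x hx hx' => by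
    rw [hE1def, hE1'def] at hx; rw [hE2def, hE2'def] at hx'
    simp only [Set.mem_union, Set.mem_setOf_eq] at hx hx'; omega
  have cB : B.ncard = E1.ncard + E1.ncard + E2.ncard + E2.ncard := by
    rw [hBsplit, Set.ncard_union_eq dj3 (finE1.union finE1') (finE2.union finE2'),
      Set.ncard_union_eq dj1 finE1 finE1', Set.ncard_union_eq dj2 finE2 finE2',
      cardE1', cardE2']
    omega
  -- decomposition of SH
  have hSHsplit : SH = ({v₀} ∪ E1) ∪ (E2 ∪ I) := by
    rw [hSHdef, hE1def, hE2def, hI2]; ext x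
    simp only [Set.mem_union, Set.mem_singleton_iff, Set.mem_setOf_eq, hv0 x]
    omega
  have dj4 : Disjoint ({v₀} : Set (ℤ × ℤ)) E1 := Set.disjoint_left.mpr fun x hx hx' => by
    simp only [Set.mem_singleton_iff] at hx
    rw [hE1def] at hx'; simp only [Set.mem_setOf_eq, hv0 x] at hx hx'; omega
  have dj5 : Disjoint E2 I := Set.disjoint_left.mpr fun x hx hx' => by
    rw [hE2def] at hx; rw [hI2] at hx'
    simp only [Set.mem_setOf_eq] at hx hx'; omega
  have dj6 : Disjoint (({v₀} : Set (ℤ × ℤ)) ∪ E1) (E2 ∪ I) :=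
    Set.disjoint_left.mpr fun x hx hx' => by
      rw [hE1def] at hx; rw [hE2def, hI2] at hx'
      simp only [Set.mem_union, Set.mem_singleton_iff, Set.mem_setOf_eq, hv0 x] at hx hx'
      omega
  have cSH : SH.ncard = 1 + E1.ncard + E2.ncard + I.ncard := by
    rw [hSHsplit, Set.ncard_union_eq dj6 ((Set.finite_singleton v₀).union finE1)
      (finE2.union finI), Set.ncard_union_eq dj4 (Set.finite_singleton v₀) finE1,
      Set.ncard_union_eq dj5 finE2 finI, Set.ncard_singleton]
    omega
  -- SH has dd a b points
  have hSHimg : SH = (fun z => z + v₀) '' (W a b 0 0 0) := by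
    rw [hSHdef]; ext y
    simp only [Set.mem_image, Set.mem_setOf_eq]
    constructor
    · rintro ⟨h1, h2, h3, h4⟩
      refine ⟨(y.1 - v₀.1, y.2 - v₀.2), ?_, ?_⟩
      · simp only [W, Set.mem_setOf_eq]
        rw [show pp b (y.1 - v₀.1, y.2 - v₀.2) = PP v₀ b y from rfl,
          show qq a (y.1 - v₀.1, y.2 - v₀.2) = QQ v₀ a y from rfl]
        omega
      · exact Prod.ext (by simp) (by simp)
    · rintro ⟨z, hz, rfl⟩
      simp only [W, Set.mem_setOf_eq] at hz
      have e1 : PP v₀ b (z + v₀) = pp b z := by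
        simp only [PP, pp, Prod.fst_add, Prod.snd_add]; ring
      have e2 : QQ v₀ a (z + v₀) = qq a z := by
        simp only [QQ, qq, Prod.fst_add, Prod.snd_add]; ring
      rw [e1, e2]
      omega
  have cSHd : SH.ncard = (dd a b).toNat := by
    rw [hSHimg, Set.ncard_image_of_injective _ (add_left_injective v₀)]
    exact core b.1.natAbs a b le_rfl hd
  -- final arithmetic
  have habs : (|(a.1 : ℝ) * (b.2 : ℝ) - (a.2 : ℝ) * (b.1 : ℝ)| : ℝ) = ((dd a b : ℤ) : ℝ) := by
    rw [show ((a.1 : ℝ) * (b.2 : ℝ) - (a.2 : ℝ) * (b.1 : ℝ)) = ((dd a b : ℤ) : ℝ) from by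
      simp only [dd]; push_cast; ring]
    exact abs_of_pos hdr
  rw [habs]
  have hcast : ((dd a b : ℤ) : ℝ) = ((dd a b).toNat : ℝ) := by
    exact_mod_cast (Int.toNat_of_nonneg hd.le).symm
  rw [hcast, ← cSHd, cSH, cB]
  push_cast
  ring


end Pick7

theorem stmt_7 (v₀ a b : ℤ × ℤ) (hdet : a.1 * b.2 - a.2 * b.1 ≠ 0)
    (I B : Set (ℤ × ℤ))
    (hI : I = {x | ∃ s t : ℝ, 0 < s ∧ s < 1 ∧ 0 < t ∧ t < 1 ∧
      (x.1 : ℝ) = v₀.1 + s * a.1 + t * b.1 ∧ (x.2 : ℝ) = v₀.2 + s * a.2 + t * b.2})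
    (hB : B = {x | (∃ s t : ℝ, 0 ≤ s ∧ s ≤ 1 ∧ 0 ≤ t ∧ t ≤ 1 ∧
      (s = 0 ∨ s = 1 ∨ t = 0 ∨ t = 1) ∧
      (x.1 : ℝ) = v₀.1 + s * a.1 + t * b.1 ∧ (x.2 : ℝ) = v₀.2 + s * a.2 + t * b.2) ∧
      x ≠ v₀ ∧ x ≠ v₀ + a ∧ x ≠ v₀ + b ∧ x ≠ v₀ + a + b}) :
    (|a.1 * b.2 - a.2 * b.1| : ℝ) = I.ncard + B.ncard / 2 + 1 := by
  rcases lt_or_gt_of_ne hdet with hneg | hpos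
  · have hswap : 0 < Pick7.dd b a := by
      have h : b.1 * a.2 - b.2 * a.1 = -(a.1 * b.2 - a.2 * b.1) := by ring
      simp only [Pick7.dd]; linarith [h]
    have hI' : I = {x | ∃ s t : ℝ, 0 < s ∧ s < 1 ∧ 0 < t ∧ t < 1 ∧
        (x.1 : ℝ) = v₀.1 + s * b.1 + t * a.1 ∧ (x.2 : ℝ) = v₀.2 + s * b.2 + t * a.2} := by
      rw [hI]; ext x; simp only [Set.mem_setOf_eq]
      constructor
      · rintro ⟨s, t, h1, h2, h3, h4, h5, h6⟩
        exact ⟨t, s, h3, h4, h1, h2, by linarith, by linarith⟩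
      · rintro ⟨s, t, h1, h2, h3, h4, h5, h6⟩
        exact ⟨t, s, h3, h4, h1, h2, by linarith, by linarith⟩
    have hB' : B = {x | (∃ s t : ℝ, 0 ≤ s ∧ s ≤ 1 ∧ 0 ≤ t ∧ t ≤ 1 ∧
        (s = 0 ∨ s = 1 ∨ t = 0 ∨ t = 1) ∧
        (x.1 : ℝ) = v₀.1 + s * b.1 + t * a.1 ∧ (x.2 : ℝ) = v₀.2 + s * b.2 + t * a.2) ∧
        x ≠ v₀ ∧ x ≠ v₀ + b ∧ x ≠ v₀ + a ∧ x ≠ v₀ + b + a} := by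
      rw [hB]; ext x; simp only [Set.mem_setOf_eq]
      constructor
      · rintro ⟨⟨s, t, h1, h2, h3, h4, ho, h5, h6⟩, n1, n2, n3, n4⟩
        refine ⟨⟨t, s, h3, h4, h1, h2, by tauto, by linarith, by linarith⟩, n1, n3, n2, ?_⟩
        rw [add_right_comm]; exact n4
      · rintro ⟨⟨s, t, h1, h2, h3, h4, ho, h5, h6⟩, n1, n2, n3, n4⟩
        refine ⟨⟨t, s, h3, h4, h1, h2, by tauto, by linarith, by linarith⟩, n1, n3, n2, ?_⟩
        rw [add_right_comm]; exact n4
    have key := Pick7.main_pos v₀ b a hswap I B hI' hB'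
    rw [show ((a.1 : ℝ) * (b.2 : ℝ) - (a.2 : ℝ) * (b.1 : ℝ))
        = -((b.1 : ℝ) * (a.2 : ℝ) - (b.2 : ℝ) * (a.1 : ℝ)) from by ring, abs_neg]
    exact key
  · exact Pick7.main_pos v₀ a b hpos I B hI hB
end

section
/- Let S ∈ GL(2,Z) and D ∈ GL(2,Z) hyperbolic with det D = 1, such that S maps the stable eigenline of D to the unstable eigenline and vice versa. Then S D S^{-1} = D^{-1} or S D S^{-1} = -D^{-1}. -/
theorem stmt_13 (S D : Matrix (Fin 2) (Fin 2) ℤ)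
    (hS : S.det = 1 ∨ S.det = -1) (hD : D.det = 1) (hhyp : 2 < |D.trace|)
    (lam mu : ℝ) (vs vu : Fin 2 → ℝ)
    (hlam : 1 < |lam|) (hmu : |mu| < 1)
    (hvu0 : vu 0 ≠ 0) (hirru : Irrational (vu 1 / vu 0))
    (hvs0 : vs 0 ≠ 0) (hirrs : Irrational (vs 1 / vs 0))
    (heigu : (D.map (Int.cast : ℤ → ℝ)).mulVec vu = lam • vu)
    (heigs : (D.map (Int.cast : ℤ → ℝ)).mulVec vs = mu • vs)
    (hSsu : ∃ c : ℝ, c ≠ 0 ∧ (S.map (Int.cast : ℤ → ℝ)).mulVec vs = c • vu)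
    (hSus : ∃ c : ℝ, c ≠ 0 ∧ (S.map (Int.cast : ℤ → ℝ)).mulVec vu = c • vs) :
    S * D * S⁻¹ = D⁻¹ ∨ S * D * S⁻¹ = -D⁻¹ := by
  obtain ⟨c, hc, hSvs⟩ := hSsu
  obtain ⟨c', hc', hSvu⟩ := hSus
  set Dr := D.map (Int.cast : ℤ → ℝ) with hDrdef
  set Sr := S.map (Int.cast : ℤ → ℝ) with hSrdef
  -- distinct eigenvalues
  have hlm : lam ≠ mu := by
    intro h; rw [h] at hlam; linarith
  have hvu1 : vu 1 ≠ 0 := by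
    intro h
    have : Irrational 0 := by rwa [h, zero_div] at hirru
    exact this ⟨0, by norm_num⟩
  have hvune : vu ≠ 0 := fun h => hvu0 (by rw [h]; rfl)
  have hvsne : vs ≠ 0 := fun h => hvs0 (by rw [h]; rfl)
  -- det Dr = 1
  have hdetDr : Dr.det = 1 := by
    have h := RingHom.map_det (Int.castRingHom ℝ) D
    simp only [RingHom.mapMatrix_apply, Int.coe_castRingHom] at h
    rw [hDrdef, ← h, hD]
    norm_num
  have hdet2 : Dr 0 0 * Dr 1 1 - Dr 0 1 * Dr 1 0 = 1 := by
    rw [← Matrix.det_fin_two]; exact hdetDr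
  -- both eigenvalues satisfy char poly
  have charpoly : ∀ (x : ℝ) (v : Fin 2 → ℝ), v ≠ 0 → Dr.mulVec v = x • v →
      x ^ 2 - (Dr 0 0 + Dr 1 1) * x + 1 = 0 := by
    intro x v hv hev
    have h0 : (Dr - x • 1).det = 0 := by
      rw [← Matrix.exists_mulVec_eq_zero_iff]
      refine ⟨v, hv, ?_⟩
      rw [Matrix.sub_mulVec, Matrix.smul_mulVec, Matrix.one_mulVec, hev, sub_self]
    rw [Matrix.det_fin_two] at h0
    simp only [Matrix.sub_apply, Matrix.smul_apply, Matrix.one_apply_eq,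
      Matrix.one_apply_ne (by decide : (0 : Fin 2) ≠ 1),
      Matrix.one_apply_ne (by decide : (1 : Fin 2) ≠ 0), smul_eq_mul,
      mul_one, mul_zero, sub_zero] at h0
    linear_combination h0 - hdet2
  have elam := charpoly lam vu hvune heigu
  have emu := charpoly mu vs hvsne heigs
  have hprod : lam * mu = 1 := by
    have hsum : lam + mu = Dr 0 0 + Dr 1 1 := by
      have h : (lam - mu) * (lam + mu - (Dr 0 0 + Dr 1 1)) = 0 := by
        linear_combination elam - emu
      rcases mul_eq_zero.mp h with h' | h'
      · exact absurd (sub_eq_zero.mp h') hlm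
      · linarith [sub_eq_zero.mp h']
    linear_combination lam * hsum - elam
  -- the two eigendirections are transverse
  have hΔ : vu 0 * vs 1 - vu 1 * vs 0 ≠ 0 := by
    intro h
    have hvs_eq : vs = (vs 0 / vu 0) • vu := by
      funext i
      fin_cases i
      · simp only [Pi.smul_apply, smul_eq_mul, Fin.zero_eta, Fin.mk_one]
        field_simp
      · simp only [Pi.smul_apply, smul_eq_mul, Fin.zero_eta, Fin.mk_one]
        field_simp
        nlinarith [h]
    have hls : Dr.mulVec vs = lam • vs := by
      rw [hvs_eq, Matrix.mulVec_smul, heigu, smul_comm]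
    have hms : mu • vs = lam • vs := by rw [← heigs, hls]
    have h0 := congrFun hms 0
    simp only [Pi.smul_apply, smul_eq_mul] at h0
    exact hlm ((mul_right_cancel₀ hvs0 h0).symm)
  -- key identity on eigenvectors
  have h1 : (Dr * Sr * Dr).mulVec vu = Sr.mulVec vu := by
    rw [← Matrix.mulVec_mulVec, heigu, Matrix.mulVec_smul, ← Matrix.mulVec_mulVec,
      hSvu, Matrix.mulVec_smul, heigs, smul_smul, smul_smul]
    congr 1
    linear_combination c' * hprod
  have h2 : (Dr * Sr * Dr).mulVec vs = Sr.mulVec vs := by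
    rw [← Matrix.mulVec_mulVec, heigs, Matrix.mulVec_smul, ← Matrix.mulVec_mulVec,
      hSvs, Matrix.mulVec_smul, heigu, smul_smul, smul_smul]
    congr 1
    linear_combination c * hprod
  set A := Dr * Sr * Dr - Sr with hAdef
  have hAu : A.mulVec vu = 0 := by rw [hAdef, Matrix.sub_mulVec, h1, sub_self]
  have hAs : A.mulVec vs = 0 := by rw [hAdef, Matrix.sub_mulVec, h2, sub_self]
  have hA0 : ∀ i j, A i j = 0 := by
    intro i j
    have e1 : A i 0 * vu 0 + A i 1 * vu 1 = 0 := by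
      have := congrFun hAu i
      simpa [Matrix.mulVec, dotProduct, Fin.sum_univ_two] using this
    have e2 : A i 0 * vs 0 + A i 1 * vs 1 = 0 := by
      have := congrFun hAs i
      simpa [Matrix.mulVec, dotProduct, Fin.sum_univ_two] using this
    have ha : A i 0 = 0 := by
      have h : A i 0 * (vu 0 * vs 1 - vu 1 * vs 0) = 0 := by
        linear_combination vs 1 * e1 - vu 1 * e2
      exact (mul_eq_zero.mp h).resolve_right hΔ
    have hb : A i 1 = 0 := by
      have h : A i 1 * vu 1 = 0 := by linear_combination e1 - vu 0 * ha
      exact (mul_eq_zero.mp h).resolve_right hvu1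
    fin_cases j
    · exact ha
    · exact hb
  -- descend to ℤ
  have hDSD : D * S * D = S := by
    ext i j
    have h := hA0 i j
    rw [hAdef, Matrix.sub_apply, sub_eq_zero] at h
    have hL : (Dr * Sr * Dr) i j = (((D * S * D) i j : ℤ) : ℝ) := by
      rw [hDrdef, hSrdef]
      simp only [Matrix.mul_apply, Fin.sum_univ_two, Matrix.map_apply]
      push_cast
      ring
    have hR : Sr i j = ((S i j : ℤ) : ℝ) := rfl
    rw [hL, hR] at h
    exact_mod_cast h
  have hSu : IsUnit S.det := by
    rcases hS with h | h <;> rw [h]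
    · exact isUnit_one
    · exact isUnit_one.neg
  have hright : D * (S * D * S⁻¹) = 1 := by
    have : D * (S * D * S⁻¹) = (D * S * D) * S⁻¹ := by
      noncomm_ring
    rw [this, hDSD, Matrix.mul_nonsing_inv S hSu]
  left
  exact (Matrix.inv_eq_right_inv hright).symm
end
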